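/- arXiv:1307.0341 — 6 statements merged into one kernel-verified Lean document; each statement's English description precedes it below -/
import Mathlib

section
/- Let z ∈ ℂ with Re z > 0 and let t₁, t₂, t₃ ∈ [−π, π], where √(1+z) denotes the principal square root. Then |(√(1+z) + e^{i t₃} − 1)(√(1+z) + e^{−i(t₁+t₃)} − 1)| ≤ |(√(1+z) − e^{i t₂} + 1)(√(1+z) − e^{i(t₁−t₂)} + 1)|, and the inequality is an equality if and only if t₁ = t₂ = t₃ = 0. -/
/-!
Put `w = √(1+z) = x + iy`, so that `x > 0` and `x² - y² = 1 + Re z > 1`, and let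
`c = e^{it₁/2}`, `A = (w-1)c`, `B = (w+1)c̄`. Multiplying the two sides by `c²` and `c̄²`
turns them into `|A² + 2uA + 1|` and `|B² - 2pB + 1|` with `u = cos(t₃ + t₁/2)` and
`p = cos(t₂ - t₁/2)`. Since `A² + 2uA + 1` is a convex combination of `(A+1)²` and `(A-1)²`,
the left side is at most `(1+u)/2 |A+1|² + (1-u)/2 |A-1|²`, while the right side,
`|(B-p)² + (1-p²)|`, is at least `|B-p|² - (1-p²)`. These two bounds differ by
`(1+u) g(c,p) + (1-u) g(-c,-p)`, where `g(c,q) = 2x - 1 + q² - Re(c(q(w̄+1) + w - 1))` is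
nonnegative because
`(2x-1+q²)² - |q(w̄+1) + w - 1|² = (x²-1-y²)(1-q)² + (1-q²)(1-q²+2x(x-1))`.
In the equality case `Re c ≥ 0` rules out `g(-c,-p) = 0`, which forces `u = 1`, then
`g(c,p) = 0`, which forces `p = 1` and `Re c = 1`.
-/

open Complex Real ComplexConjugate

theorem add_exp_mul_add_exp_neg (X θ : ℂ) :
    (X + exp (θ * I)) * (X + exp (-θ * I)) = X ^ 2 + 2 * cos θ * X + 1 := by
  have h : exp (θ * I) * exp (-θ * I) = 1 := by rw [← Complex.exp_add]; ring_nf; simp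
  rw [Complex.cos]
  linear_combination h

theorem sub_exp_mul_sub_exp_neg (X θ : ℂ) :
    (X - exp (θ * I)) * (X - exp (-θ * I)) = X ^ 2 - 2 * cos θ * X + 1 := by
  have h : exp (θ * I) * exp (-θ * I) = 1 := by rw [← Complex.exp_add]; ring_nf; simp
  rw [Complex.cos]
  linear_combination h

theorem norm_add_exp_mul_add_exp (W : ℂ) (s t : ℝ) :
    ‖(W + exp (I * t) - 1) * (W + exp (-(I * (s + t))) - 1)‖ =
      ‖((W - 1) * exp ((s / 2 : ℝ) * I)) ^ 2
        + 2 * Real.cos (t + s / 2) * ((W - 1) * exp ((s / 2 : ℝ) * I)) + 1‖ := by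
  rw [add_sub_right_comm, add_sub_right_comm]
  set X := W - 1
  set c := exp ((s / 2 : ℝ) * I)
  have h₁ : exp (I * t) * c = exp ((t + s / 2 : ℝ) * I) := by
    rw [← Complex.exp_add]; push_cast; ring_nf
  have h₂ : exp (-(I * (s + t))) * c = exp (-(t + s / 2 : ℝ) * I) := by
    rw [← Complex.exp_add]; push_cast; ring_nf
  calc ‖(X + exp (I * t)) * (X + exp (-(I * (s + t))))‖
      = ‖(X + exp (I * t)) * (X + exp (-(I * (s + t)))) * c ^ 2‖ := by
        rw [norm_mul _ (c ^ 2), norm_pow, norm_exp_ofReal_mul_I, one_pow, mul_one]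
    _ = ‖(X * c + exp (I * t) * c) * (X * c + exp (-(I * (s + t))) * c)‖ := by ring_nf
    _ = _ := by rw [h₁, h₂, add_exp_mul_add_exp_neg, ofReal_cos]

theorem norm_sub_exp_mul_sub_exp (W : ℂ) (s t : ℝ) :
    ‖(W - exp (I * t) + 1) * (W - exp (I * (s - t)) + 1)‖ =
      ‖((W + 1) * conj (exp ((s / 2 : ℝ) * I))) ^ 2
        - 2 * Real.cos (t - s / 2) * ((W + 1) * conj (exp ((s / 2 : ℝ) * I))) + 1‖ := by
  rw [sub_add_eq_add_sub, sub_add_eq_add_sub]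
  set Y := W + 1
  have hc : conj (exp ((s / 2 : ℝ) * I)) = exp ((-(s / 2) : ℝ) * I) := by
    rw [← exp_conj, map_mul, conj_ofReal, conj_I]; push_cast; ring_nf
  rw [hc]
  set c := exp ((-(s / 2) : ℝ) * I)
  have h₁ : exp (I * t) * c = exp ((t - s / 2 : ℝ) * I) := by
    rw [← Complex.exp_add]; push_cast; ring_nf
  have h₂ : exp (I * (s - t)) * c = exp (-(t - s / 2 : ℝ) * I) := by
    rw [← Complex.exp_add]; push_cast; ring_nf
  calc ‖(Y - exp (I * t)) * (Y - exp (I * (s - t)))‖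
      = ‖(Y - exp (I * t)) * (Y - exp (I * (s - t))) * c ^ 2‖ := by
        rw [norm_mul _ (c ^ 2), norm_pow, norm_exp_ofReal_mul_I, one_pow, mul_one]
    _ = ‖(Y * c - exp (I * t) * c) * (Y * c - exp (I * (s - t)) * c)‖ := by ring_nf
    _ = _ := by rw [h₁, h₂, sub_exp_mul_sub_exp_neg, ofReal_cos]

theorem norm_sq_add_two_mul_add_one_le (A : ℂ) {u : ℝ} (hu : u ∈ Set.Icc (-1) 1) :
    ‖A ^ 2 + 2 * u * A + 1‖ ≤
      (1 + u) / 2 * ‖A + 1‖ ^ 2 + (1 - u) / 2 * ‖A - 1‖ ^ 2 := by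
  have h : A ^ 2 + 2 * u * A + 1 =
      (((1 + u) / 2 : ℝ) : ℂ) * (A + 1) ^ 2 + (((1 - u) / 2 : ℝ) : ℂ) * (A - 1) ^ 2 := by
    push_cast; ring
  rw [h]
  refine (norm_add_le _ _).trans_eq ?_
  rw [norm_mul, norm_mul, norm_pow, norm_pow, Complex.norm_real, Complex.norm_real,
    Real.norm_of_nonneg (by linarith [hu.1]), Real.norm_of_nonneg (by linarith [hu.2])]

theorem norm_sub_sq_sub_le_norm_sq_sub_two_mul_add_one (B : ℂ) {p : ℝ}
    (hp : p ∈ Set.Icc (-1) 1) :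
    ‖B - p‖ ^ 2 - (1 - p ^ 2) ≤ ‖B ^ 2 - 2 * p * B + 1‖ := by
  have h : B ^ 2 - 2 * p * B + 1 = (B - p) ^ 2 - (-(1 - p ^ 2) : ℝ) := by push_cast; ring
  rw [h]
  refine le_trans ?_ (norm_sub_norm_le _ _)
  rw [norm_pow, Complex.norm_real, Real.norm_eq_abs, abs_neg,
    abs_of_nonneg (by nlinarith [hp.1, hp.2])]

noncomputable def gap (w c : ℂ) (q : ℝ) : ℝ :=
  2 * w.re - 1 + q ^ 2 - (c * (q * (conj w + 1) + (w - 1))).re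

theorem gap_one (w c : ℂ) : gap w c 1 = 2 * w.re * (1 - c.re) := by
  simp only [gap, one_pow, sub_add_cancel, ofReal_one, one_mul, add_add_sub_cancel, mul_re,
    add_re, conj_re, add_im, conj_im, neg_add_cancel, mul_zero, sub_zero]
  ring

theorem sq_sub_normSq_eq (w : ℂ) (q : ℝ) :
    (2 * w.re - 1 + q ^ 2) ^ 2 - normSq (q * (conj w + 1) + (w - 1)) =
      (w.re ^ 2 - 1 - w.im ^ 2) * (1 - q) ^ 2
        + (1 - q ^ 2) * (1 - q ^ 2 + 2 * w.re * (w.re - 1)) := by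
  simp only [normSq_apply, add_re, mul_re, ofReal_re, conj_re, one_re, ofReal_im, add_im, conj_im,
    one_im, add_zero, mul_neg, zero_mul, neg_zero, sub_zero, sub_re, mul_im, sub_im]
  ring

theorem norm_mul_conj_add_one_add_sub_one_lt {w : ℂ} (hw : 0 < w.re)
    (hw1 : 1 + w.im ^ 2 < w.re ^ 2) {q : ℝ} (hq : q ∈ Set.Icc (-1) 1) (hq1 : q ≠ 1) :
    ‖q * (conj w + 1) + (w - 1)‖ < 2 * w.re - 1 + q ^ 2 := by
  have hx : 1 < w.re := by nlinarith
  have h1q : 0 < 1 - q := sub_pos.2 (lt_of_le_of_ne hq.2 hq1)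
  have h1q2 : 0 ≤ 1 - q ^ 2 := by nlinarith [hq.1, hq.2]
  refine lt_of_pow_lt_pow_left₀ 2 (by nlinarith) ?_
  rw [Complex.sq_norm]
  have := sq_sub_normSq_eq w q
  have : 0 < (w.re ^ 2 - 1 - w.im ^ 2) * (1 - q) ^ 2 := by apply mul_pos <;> nlinarith
  have : 0 ≤ (1 - q ^ 2) * (1 - q ^ 2 + 2 * w.re * (w.re - 1)) := by
    apply mul_nonneg <;> nlinarith
  linarith

theorem gap_pos {w c : ℂ} (hw : 0 < w.re) (hw1 : 1 + w.im ^ 2 < w.re ^ 2) (hc : ‖c‖ ≤ 1)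
    {q : ℝ} (hq : q ∈ Set.Icc (-1) 1) (hq1 : q ≠ 1) : 0 < gap w c q := by
  have h := calc (c * (q * (conj w + 1) + (w - 1))).re
      ≤ ‖c * (q * (conj w + 1) + (w - 1))‖ := Complex.re_le_norm _
    _ ≤ ‖q * (conj w + 1) + (w - 1)‖ := by
        rw [norm_mul]; exact mul_le_of_le_one_left (norm_nonneg _) hc
    _ < 2 * w.re - 1 + q ^ 2 := norm_mul_conj_add_one_add_sub_one_lt hw hw1 hq hq1
  unfold gap; linarith

theorem gap_nonneg {w c : ℂ} (hw : 0 < w.re) (hw1 : 1 + w.im ^ 2 < w.re ^ 2) (hc : ‖c‖ = 1)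
    {p : ℝ} (hp : p ∈ Set.Icc (-1) 1) : 0 ≤ gap w c p := by
  rcases eq_or_ne p 1 with rfl | hp1
  · rw [gap_one]
    have := (Complex.re_le_norm c).trans_eq hc
    nlinarith
  · exact (gap_pos hw hw1 hc.le hp hp1).le

theorem gap_neg_pos {w c : ℂ} (hw : 0 < w.re) (hw1 : 1 + w.im ^ 2 < w.re ^ 2) (hc : ‖c‖ = 1)
    (hc0 : 0 ≤ c.re) {p : ℝ} (hp : p ∈ Set.Icc (-1) 1) : 0 < gap w (-c) (-p) := by
  rcases eq_or_ne (-p) 1 with hp1 | hp1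
  · rw [hp1, gap_one, neg_re]
    nlinarith
  · exact gap_pos hw hw1 (by rw [norm_neg, hc]) ⟨by linarith [hp.2], by linarith [hp.1]⟩ hp1

theorem re_sq_add_im_sq_eq_one {c : ℂ} (hc : ‖c‖ = 1) : c.re ^ 2 + c.im ^ 2 = 1 := by
  have h := Complex.sq_norm c
  rw [hc, one_pow, normSq_apply] at h
  rw [pow_two, pow_two]
  exact h.symm

theorem norm_sub_sq_sub_eq_norm_add_one_sq (w : ℂ) {c : ℂ} (hc : ‖c‖ = 1) (p : ℝ) :
    ‖(w + 1) * conj c - p‖ ^ 2 - (1 - p ^ 2) = ‖(w - 1) * c + 1‖ ^ 2 + 2 * gap w c p := by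
  simp only [Complex.sq_norm, normSq_apply, gap, sub_re, mul_re, add_re, one_re, conj_re, add_im,
    one_im, add_zero, conj_im, mul_neg, sub_neg_eq_add, ofReal_re, sub_im, mul_im, ofReal_im,
    sub_zero, zero_mul, neg_zero]
  linear_combination (4 * w.re) * re_sq_add_im_sq_eq_one hc

theorem norm_sub_sq_sub_eq_norm_sub_one_sq (w : ℂ) {c : ℂ} (hc : ‖c‖ = 1) (p : ℝ) :
    ‖(w + 1) * conj c - p‖ ^ 2 - (1 - p ^ 2) =
      ‖(w - 1) * c - 1‖ ^ 2 + 2 * gap w (-c) (-p) := by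
  simp only [Complex.sq_norm, normSq_apply, gap, sub_re, mul_re, add_re, one_re, conj_re, add_im,
    one_im, add_zero, conj_im, mul_neg, sub_neg_eq_add, ofReal_re, sub_im, mul_im, ofReal_im,
    sub_zero, even_two, Even.neg_pow, ofReal_neg, neg_mul, neg_re, zero_mul, neg_zero, neg_im,
    neg_neg, neg_sub]
  linear_combination (4 * w.re) * re_sq_add_im_sq_eq_one hc

theorem norm_quadratic_le {w c : ℂ} (hw : 0 < w.re) (hw1 : 1 + w.im ^ 2 < w.re ^ 2)
    (hc : ‖c‖ = 1) (hc0 : 0 ≤ c.re) {u p : ℝ} (hu : u ∈ Set.Icc (-1) 1)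
    (hp : p ∈ Set.Icc (-1) 1) :
    ‖((w - 1) * c) ^ 2 + 2 * u * ((w - 1) * c) + 1‖
        ≤ ‖((w + 1) * conj c) ^ 2 - 2 * p * ((w + 1) * conj c) + 1‖ ∧
      (‖((w - 1) * c) ^ 2 + 2 * u * ((w - 1) * c) + 1‖
          = ‖((w + 1) * conj c) ^ 2 - 2 * p * ((w + 1) * conj c) + 1‖ →
        u = 1 ∧ p = 1 ∧ c.re = 1) := by
  have hL := norm_sq_add_two_mul_add_one_le ((w - 1) * c) hu
  have hR := norm_sub_sq_sub_le_norm_sq_sub_two_mul_add_one ((w + 1) * conj c) hp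
  have hbounds : (1 + u) / 2 * ‖(w - 1) * c + 1‖ ^ 2 + (1 - u) / 2 * ‖(w - 1) * c - 1‖ ^ 2
      = ‖(w + 1) * conj c - p‖ ^ 2 - (1 - p ^ 2)
        - ((1 + u) * gap w c p + (1 - u) * gap w (-c) (-p)) := by
    linear_combination (-(1 + u) / 2) * norm_sub_sq_sub_eq_norm_add_one_sq w hc p
      - (1 - u) / 2 * norm_sub_sq_sub_eq_norm_sub_one_sq w hc p
  have hgp : 0 ≤ (1 + u) * gap w c p := mul_nonneg (by linarith [hu.1]) (gap_nonneg hw hw1 hc hp)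
  have hgm := gap_neg_pos hw hw1 hc hc0 hp
  have hgm' : 0 ≤ (1 - u) * gap w (-c) (-p) := mul_nonneg (by linarith [hu.2]) hgm.le
  refine ⟨by linarith, fun heq => ?_⟩
  have hu1 : u = 1 := by
    have : (1 - u) * gap w (-c) (-p) = 0 := by linarith
    linarith [(mul_eq_zero.1 this).resolve_right hgm.ne']
  subst hu1
  have hg : gap w c p = 0 := by linarith
  have hp1 : p = 1 := by
    by_contra hp1
    exact (gap_pos hw hw1 hc.le hp hp1).ne' hg
  subst hp1
  rw [gap_one] at hg
  exact ⟨rfl, rfl, by nlinarith⟩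

theorem re_cpow_one_half_pos {ζ : ℂ} (hζ : 0 < ζ.re) : 0 < (ζ ^ (1 / 2 : ℂ)).re := by
  rw [one_div, cpow_inv_two_re]
  exact Real.sqrt_pos.2 (by linarith [norm_nonneg ζ])

theorem cpow_one_half_sq (ζ : ℂ) : (ζ ^ (1 / 2 : ℂ)) ^ 2 = ζ := by
  rw [one_div]; exact cpow_ofNat_inv_pow ζ 2

theorem eq_zero_of_cos_eq_one {t : ℝ} (ht : t ∈ Set.Icc (-π) π) (h : Real.cos t = 1) :
    t = 0 :=
  (Real.cos_eq_one_iff_of_lt_of_lt (by linarith [ht.1, pi_pos]) (by linarith [ht.2, pi_pos])).1 h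

/-- For `z ∈ ℂ` with `Re z > 0` and `t₁, t₂, t₃ ∈ [−π, π]`, with `√(1+z)` principal,
`|(√(1+z) + e^{it₃} − 1)(√(1+z) + e^{−i(t₁+t₃)} − 1)|
  ≤ |(√(1+z) − e^{it₂} + 1)(√(1+z) − e^{i(t₁−t₂)} + 1)|`,
with equality if and only if `t₁ = t₂ = t₃ = 0`. -/
theorem stmt_3 (z : ℂ) (hz : 0 < z.re) (t₁ t₂ t₃ : ℝ)
    (h1 : t₁ ∈ Set.Icc (-Real.pi) Real.pi) (h2 : t₂ ∈ Set.Icc (-Real.pi) Real.pi)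
    (h3 : t₃ ∈ Set.Icc (-Real.pi) Real.pi) :
    ‖((1 + z) ^ (1/2 : ℂ) + Complex.exp (Complex.I * t₃) - 1) *
        ((1 + z) ^ (1/2 : ℂ) + Complex.exp (-(Complex.I * (t₁ + t₃))) - 1)‖ ≤
      ‖((1 + z) ^ (1/2 : ℂ) - Complex.exp (Complex.I * t₂) + 1) *
        ((1 + z) ^ (1/2 : ℂ) - Complex.exp (Complex.I * (t₁ - t₂)) + 1)‖ ∧
    (‖((1 + z) ^ (1/2 : ℂ) + Complex.exp (Complex.I * t₃) - 1) *
        ((1 + z) ^ (1/2 : ℂ) + Complex.exp (-(Complex.I * (t₁ + t₃))) - 1)‖ =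
      ‖((1 + z) ^ (1/2 : ℂ) - Complex.exp (Complex.I * t₂) + 1) *
        ((1 + z) ^ (1/2 : ℂ) - Complex.exp (Complex.I * (t₁ - t₂)) + 1)‖
      ↔ t₁ = 0 ∧ t₂ = 0 ∧ t₃ = 0) := by
  have hz1 : 0 < (1 + z).re := by simp only [add_re, one_re]; linarith
  have hw := re_cpow_one_half_pos hz1
  have hw1 : 1 + ((1 + z) ^ (1/2 : ℂ)).im ^ 2 < ((1 + z) ^ (1/2 : ℂ)).re ^ 2 := by
    have h := congrArg re (cpow_one_half_sq (1 + z))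
    simp only [pow_two, mul_re, add_re, one_re] at h
    nlinarith
  have hc0 : 0 ≤ (exp ((t₁ / 2 : ℝ) * I)).re := by
    rw [exp_ofReal_mul_I_re]
    exact Real.cos_nonneg_of_mem_Icc ⟨by linarith [h1.1], by linarith [h1.2]⟩
  obtain ⟨hle, heq⟩ := norm_quadratic_le hw hw1 (norm_exp_ofReal_mul_I _) hc0
    (u := Real.cos (t₃ + t₁ / 2)) (p := Real.cos (t₂ - t₁ / 2))
    ⟨neg_one_le_cos _, cos_le_one _⟩ ⟨neg_one_le_cos _, cos_le_one _⟩
  refine ⟨?_, fun h => ?_, ?_⟩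
  · rwa [norm_add_exp_mul_add_exp, norm_sub_exp_mul_sub_exp]
  · rw [norm_add_exp_mul_add_exp, norm_sub_exp_mul_sub_exp] at h
    obtain ⟨hu, hp, hc⟩ := heq h
    rw [exp_ofReal_mul_I_re] at hc
    have ht₁ : t₁ = 0 := by
      have := eq_zero_of_cos_eq_one ⟨by linarith [h1.1, pi_pos], by linarith [h1.2, pi_pos]⟩ hc
      linarith
    subst ht₁
    simp only [zero_div, add_zero, sub_zero] at hu hp
    exact ⟨rfl, eq_zero_of_cos_eq_one h2 hp, eq_zero_of_cos_eq_one h3 hu⟩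
  · rintro ⟨rfl, rfl, rfl⟩
    simp only [ofReal_zero, add_zero, sub_zero, mul_zero, neg_zero, Complex.exp_zero,
      add_sub_cancel_right, sub_add_cancel]
end

section
/- Let z ∈ ℂ with Re z > 0 and let α ∈ [−π, π], where √(1+z) denotes the principal square root. Then the strict inequality |√(1+z) − 1 + e^{−iα}|² < |√(1+z) + 1 + e^{iα}|² holds. -/
open Complex Real

/-!
Write `w = a + b i` for the principal square root of `1 + z` and `e^{iα} = c + s i`.
Expanding both squared moduli, their difference is `4 (a + b s + c)`. Since `Re z > 0`, the
relation `w² = 1 + z` gives `a² - b² > 1`, and `Re w = a > 0`; by Cauchy–Schwarz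
`|b s + c| ≤ √(b² + 1) < a`, so the difference is positive.
-/

namespace Complex

lemma re_cpow_half_pos {x : ℂ} (hx : x ∈ slitPlane) : 0 < (x ^ (1 / 2 : ℂ)).re := by
  rw [one_div, cpow_inv_two_re, Real.sqrt_pos]
  rcases mem_slitPlane_iff.1 hx with hre | him
  · linarith [norm_nonneg x]
  · linarith [(abs_lt.1 (abs_re_lt_norm.2 him)).1]

lemma cpow_half_sq (x : ℂ) : (x ^ (1 / 2 : ℂ)) ^ 2 = x := by
  simpa only [one_div, Nat.cast_ofNat] using cpow_nat_inv_pow x two_ne_zero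

lemma sq_norm_add_one_add_exp_sub (w : ℂ) (α : ℝ) :
    ‖w + 1 + exp (I * α)‖ ^ 2 - ‖w - 1 + exp (-(I * α))‖ ^ 2
      = 4 * (w.re + w.im * Real.sin α + Real.cos α) := by
  have hexp : ∀ θ : ℝ, exp (I * θ) = Real.cos θ + Real.sin θ * I := fun θ ↦ by
    rw [mul_comm, exp_mul_I, ← ofReal_cos, ← ofReal_sin]
  rw [← mul_neg, ← ofReal_neg, hexp, hexp, Real.cos_neg, Real.sin_neg, Complex.sq_norm,
    Complex.sq_norm, normSq_apply, normSq_apply]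
  simp only [add_re, add_im, sub_re, sub_im, one_re, one_im, ofReal_re, ofReal_im, mul_re, mul_im,
    I_re, I_im, ofReal_neg, neg_re, neg_im]
  nlinarith [Real.sin_sq_add_cos_sq α]

end Complex

lemma add_mul_sin_add_cos_pos {a b : ℝ} (ha : 0 < a) (hab : 1 < a ^ 2 - b ^ 2) (α : ℝ) :
    0 < a + b * Real.sin α + Real.cos α := by
  have hcs : (b * Real.sin α + Real.cos α) ^ 2 ≤ b ^ 2 + 1 := by
    nlinarith [Real.sin_sq_add_cos_sq α, sq_nonneg (b * Real.cos α - Real.sin α)]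
  have habs : |b * Real.sin α + Real.cos α| < a :=
    abs_lt_of_sq_lt_sq (by linarith) ha.le
  linarith [neg_abs_le (b * Real.sin α + Real.cos α)]

theorem stmt_6_general (z : ℂ) (hz : 0 < z.re) (α : ℝ) :
    ‖(1 + z) ^ (1/2 : ℂ) - 1 + Complex.exp (-(Complex.I * α))‖ ^ 2 <
      ‖(1 + z) ^ (1/2 : ℂ) + 1 + Complex.exp (Complex.I * α)‖ ^ 2 := by
  set w : ℂ := (1 + z) ^ (1/2 : ℂ)
  have hre : 0 < (1 + z).re := by simp only [add_re, one_re]; linarith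
  have hw_re : 0 < w.re := re_cpow_half_pos (mem_slitPlane_iff.2 (Or.inl hre))
  have hw_sq : w.re ^ 2 - w.im ^ 2 = 1 + z.re := by
    have h := congrArg re (cpow_half_sq (1 + z))
    rw [sq, mul_re, add_re, one_re] at h
    linarith
  have hpos := add_mul_sin_add_cos_pos hw_re (by linarith) α
  linarith [sq_norm_add_one_add_exp_sub w α]

/-- For `z ∈ ℂ` with `Re z > 0` and `α ∈ [−π, π]`, with `√(1+z)` the principal square root,
the strict inequality `|√(1+z) − 1 + e^{−iα}|² < |√(1+z) + 1 + e^{iα}|²` holds. -/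
theorem stmt_6 (z : ℂ) (hz : 0 < z.re) (α : ℝ) (hα : α ∈ Set.Icc (-Real.pi) Real.pi) :
    ‖(1 + z) ^ (1/2 : ℂ) - 1 + Complex.exp (-(Complex.I * α))‖ ^ 2 <
      ‖(1 + z) ^ (1/2 : ℂ) + 1 + Complex.exp (Complex.I * α)‖ ^ 2 :=
  stmt_6_general z hz α
end

section
/- Let z ∈ ℂ with Re z > 0 and α ∈ [−π, π], with √(1+z) the principal square root, and assume |Re{(√(1+z)+1) e^{−iα}}| < 2|√(1+z)+1|² / (1 + |√(1+z)+1|²). Let x* ∈ (0, π) be determined by cos(x*) = ((1 + |√(1+z)+1|²)/(2|√(1+z)+1|²)) · Re{(√(1+z)+1) e^{−iα}}. Then the strict inequality |√(1+z) − 1 + e^{−iα}|² < |√(1+z) + 1 − e^{iα} e^{i x*}| · |√(1+z) + 1 − e^{iα} e^{−i x*}| holds. -/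
/-!
Put `u = √(1+z)` and `w = (u + 1) e^{-iα}`. Multiplying by `e^{-iα}` turns the right-hand side into
`‖w - e^{ix*}‖ ‖w - e^{-ix*}‖`, and the choice of `x*` makes its square equal to
`(Im w)² (‖w‖² - 1)² / ‖w‖²`; since `Im w` is large when `Re w` is small, the hypothesis bounds it
from below by `(‖w‖² - 1)² / (1 + ‖w‖²)`. For the left-hand side, the principal root has
`Re u ≥ 0` and `Re u² > 1`, hence with `m = ‖u - 1‖` we get `‖w‖² = m² + 4 Re u` and
`m² < 2 Re u (Re u - 1)`; together with `‖u - 1 + e^{-iα}‖ ≤ m + 1` this bounds its square by the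
same quantity `(‖w‖² - 1)² / (1 + ‖w‖²)`.
-/

open Complex

lemma Complex.re_cpow_one_half_nonneg (x : ℂ) : 0 ≤ (x ^ (1 / 2 : ℂ)).re := by
  rcases eq_or_ne x 0 with rfl | hx
  · simp
  rw [cpow_def_of_ne_zero hx, exp_re]
  refine mul_nonneg (Real.exp_pos _).le (Real.cos_nonneg_of_mem_Icc ?_)
  have him : (log x * (1 / 2)).im = x.arg / 2 := by simp [log_im]; ring
  rw [him]
  constructor <;> linarith [neg_pi_lt_arg x, arg_le_pi x]

lemma Complex.one_lt_re_of_one_lt_re_sq {u : ℂ} (hu : 0 ≤ u.re) (h : 1 < (u ^ 2).re) :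
    1 < u.re := by
  rw [sq, mul_re] at h
  nlinarith [sq_nonneg u.im]

lemma Complex.norm_sub_exp_sq (w : ℂ) (x : ℝ) :
    ‖w - exp (I * x)‖ ^ 2 = ‖w‖ ^ 2 + 1 - 2 * (w.re * Real.cos x + w.im * Real.sin x) := by
  rw [mul_comm, exp_mul_I, ← ofReal_cos, ← ofReal_sin, Complex.sq_norm, Complex.sq_norm,
    normSq_apply, normSq_apply]
  simp only [sub_re, sub_im, add_re, add_im, mul_re, mul_im, ofReal_re, ofReal_im, I_re, I_im]
  linear_combination Real.cos_sq_add_sin_sq x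

lemma Complex.norm_sub_mul_exp (v b : ℂ) (t : ℝ) :
    ‖v - exp (I * t) * b‖ = ‖v * exp (-(I * t)) - b‖ := by
  have : v - exp (I * t) * b = exp (I * t) * (v * exp (-(I * t)) - b) := by
    rw [mul_sub, ← mul_assoc, mul_comm _ v, mul_assoc, ← exp_add]; simp
  rw [this, norm_mul, mul_comm I, norm_exp_ofReal_mul_I, one_mul]

lemma Complex.norm_sub_exp_mul_norm_sub_exp_neg_sq {w : ℂ} (hw : w ≠ 0) {x : ℝ}
    (hx : Real.cos x = (1 + ‖w‖ ^ 2) / (2 * ‖w‖ ^ 2) * w.re) :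
    (‖w - exp (I * x)‖ * ‖w - exp (-(I * x))‖) ^ 2 = w.im ^ 2 * (‖w‖ ^ 2 - 1) ^ 2 / ‖w‖ ^ 2 := by
  have hneg : -(I * x) = I * ((-x : ℝ) : ℂ) := by push_cast; ring
  have hr : 0 < ‖w‖ ^ 2 := by positivity
  have hre : ‖w‖ ^ 2 = w.re ^ 2 + w.im ^ 2 := by rw [Complex.sq_norm, normSq_apply]; ring
  have hcos : 2 * ‖w‖ ^ 2 * Real.cos x = (1 + ‖w‖ ^ 2) * w.re := by
    rw [hx]; field_simp
  rw [mul_pow, hneg, norm_sub_exp_sq, norm_sub_exp_sq, Real.cos_neg, Real.sin_neg,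
    eq_div_iff hr.ne']
  refine mul_right_cancel₀ hr.ne' ?_
  linear_combination (-4 * w.im ^ 2 * ‖w‖ ^ 4) * Real.cos_sq_add_sin_sq x
    + (2 * (w.re ^ 2 + w.im ^ 2) * Real.cos x * ‖w‖ ^ 2
      + w.re * (1 + ‖w‖ ^ 2) * (w.re ^ 2 + w.im ^ 2 - 2 * ‖w‖ ^ 2)) * hcos
    - (w.re ^ 2 * (1 + ‖w‖ ^ 2) ^ 2 - (1 + ‖w‖ ^ 2) ^ 2 * ‖w‖ ^ 2) * hre

lemma Complex.sq_sub_one_sq_div_lt_norm_sub_exp_mul_norm_sub_exp_neg {w : ℂ} (hw : ‖w‖ ≠ 1)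
    (hre : |w.re| < 2 * ‖w‖ ^ 2 / (1 + ‖w‖ ^ 2)) {x : ℝ}
    (hx : Real.cos x = (1 + ‖w‖ ^ 2) / (2 * ‖w‖ ^ 2) * w.re) :
    (‖w‖ ^ 2 - 1) ^ 2 / (1 + ‖w‖ ^ 2) < ‖w - exp (I * x)‖ * ‖w - exp (-(I * x))‖ := by
  have hw0 : w ≠ 0 := by
    rintro rfl
    simp at hre
  have hr : 0 < ‖w‖ ^ 2 := by positivity
  have hr1 : 0 < (‖w‖ ^ 2 - 1) ^ 2 := by
    refine sq_pos_of_ne_zero (sub_ne_zero.mpr ?_)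
    exact (pow_eq_one_iff_of_nonneg (norm_nonneg w) two_ne_zero).not.mpr hw
  have hnorm : ‖w‖ ^ 2 = w.re ^ 2 + w.im ^ 2 := by rw [Complex.sq_norm, normSq_apply]; ring
  have hre2 : (|w.re| * (1 + ‖w‖ ^ 2)) ^ 2 < (2 * ‖w‖ ^ 2) ^ 2 :=
    pow_lt_pow_left₀ ((lt_div_iff₀ (by positivity)).mp hre) (by positivity) two_ne_zero
  have him : ‖w‖ ^ 2 * (‖w‖ ^ 2 - 1) ^ 2 < w.im ^ 2 * (1 + ‖w‖ ^ 2) ^ 2 := by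
    rw [mul_pow, sq_abs] at hre2
    linear_combination hre2 + (1 + ‖w‖ ^ 2) ^ 2 * hnorm
  refine lt_of_pow_lt_pow_left₀ 2 (by positivity) ?_
  rw [norm_sub_exp_mul_norm_sub_exp_neg_sq hw0 hx, div_pow, div_lt_div_iff₀ (by positivity) hr]
  linear_combination mul_lt_mul_of_pos_right him hr1

lemma add_one_sq_mul_lt_sq {m p : ℝ} (hm : 0 ≤ m) (hp : 1 < p) (h : m ^ 2 < 2 * p * (p - 1)) :
    (m + 1) ^ 2 * (1 + (m ^ 2 + 4 * p)) < (m ^ 2 + 4 * p - 1) ^ 2 := by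
  have hm2p : m < 2 * p := by nlinarith
  nlinarith [mul_nonneg (sq_nonneg (m - 1)) (sub_nonneg.mpr hm2p.le)]

lemma Complex.norm_sub_one_add_sq_lt {u a : ℂ} (hu : 0 ≤ u.re) (hu2 : 1 < (u ^ 2).re)
    (ha : ‖a‖ ≤ 1) : ‖u - 1 + a‖ ^ 2 < (‖u + 1‖ ^ 2 - 1) ^ 2 / (1 + ‖u + 1‖ ^ 2) := by
  have hp := one_lt_re_of_one_lt_re_sq hu hu2
  have hplus : ‖u + 1‖ ^ 2 = ‖u - 1‖ ^ 2 + 4 * u.re := by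
    simp only [Complex.sq_norm, normSq_apply, add_re, add_im, sub_re, sub_im, one_re, one_im]
    ring
  have hminus : ‖u - 1‖ ^ 2 < 2 * u.re * (u.re - 1) := by
    rw [sq, mul_re] at hu2
    simp only [Complex.sq_norm, normSq_apply, sub_re, sub_im, one_re, one_im]
    linear_combination hu2
  have htri : ‖u - 1 + a‖ ≤ ‖u - 1‖ + 1 := (norm_add_le _ _).trans (by linarith)
  rw [lt_div_iff₀ (by positivity), hplus]
  calc ‖u - 1 + a‖ ^ 2 * (1 + (‖u - 1‖ ^ 2 + 4 * u.re))
      ≤ (‖u - 1‖ + 1) ^ 2 * (1 + (‖u - 1‖ ^ 2 + 4 * u.re)) := by gcongr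
    _ < (‖u - 1‖ ^ 2 + 4 * u.re - 1) ^ 2 := add_one_sq_mul_lt_sq (norm_nonneg _) hp hminus

theorem stmt_7_general (z : ℂ) (hz : 0 < z.re) (α : ℝ)
    (hcond : |(((1 + z) ^ (1/2 : ℂ) + 1) * Complex.exp (-(Complex.I * α))).re| <
      2 * ‖(1 + z) ^ (1/2 : ℂ) + 1‖ ^ 2 /
        (1 + ‖(1 + z) ^ (1/2 : ℂ) + 1‖ ^ 2))
    (xs : ℝ)
    (hcos : Real.cos xs = (1 + ‖(1 + z) ^ (1/2 : ℂ) + 1‖ ^ 2) /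
        (2 * ‖(1 + z) ^ (1/2 : ℂ) + 1‖ ^ 2) *
        (((1 + z) ^ (1/2 : ℂ) + 1) * Complex.exp (-(Complex.I * α))).re) :
    ‖(1 + z) ^ (1/2 : ℂ) - 1 + Complex.exp (-(Complex.I * α))‖ ^ 2 <
      ‖(1 + z) ^ (1/2 : ℂ) + 1 - Complex.exp (Complex.I * α) * Complex.exp (Complex.I * xs)‖ *
      ‖(1 + z) ^ (1/2 : ℂ) + 1 - Complex.exp (Complex.I * α) * Complex.exp (-(Complex.I * xs))‖ := by
  set u := (1 + z) ^ (1/2 : ℂ)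
  have hu : 0 ≤ u.re := re_cpow_one_half_nonneg _
  have hu2 : 1 < (u ^ 2).re := by simpa [u] using hz
  set w := (u + 1) * exp (-(I * α))
  have hw : ‖w‖ = ‖u + 1‖ := by simp [w, norm_exp]
  have hw1 : 1 < ‖w‖ := by
    rw [hw]
    have hu1 := one_lt_re_of_one_lt_re_sq hu hu2
    linarith [re_le_norm (u + 1), add_re u 1, one_re]
  rw [← hw] at hcond hcos
  calc ‖u - 1 + exp (-(I * α))‖ ^ 2
      < (‖w‖ ^ 2 - 1) ^ 2 / (1 + ‖w‖ ^ 2) := hw ▸ norm_sub_one_add_sq_lt hu hu2 (by simp [norm_exp])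
    _ < ‖w - exp (I * xs)‖ * ‖w - exp (-(I * xs))‖ :=
      sq_sub_one_sq_div_lt_norm_sub_exp_mul_norm_sub_exp_neg hw1.ne' hcond hcos
    _ = _ := by rw [norm_sub_mul_exp, norm_sub_mul_exp]

/-- Under the condition
`|Re{(√(1+z)+1)e^{−iα}}| < 2|√(1+z)+1|²/(1+|√(1+z)+1|²)`, with `x* ∈ (0, π)` determined by
`cos x* = ((1+|√(1+z)+1|²)/(2|√(1+z)+1|²)) Re{(√(1+z)+1)e^{−iα}}`, the strict inequality
`|√(1+z) − 1 + e^{−iα}|² < |√(1+z) + 1 − e^{iα}e^{ix*}| |√(1+z) + 1 − e^{iα}e^{−ix*}|` holds. -/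
theorem stmt_7 (z : ℂ) (hz : 0 < z.re) (α : ℝ) (hα : α ∈ Set.Icc (-Real.pi) Real.pi)
    (hcond : |(((1 + z) ^ (1/2 : ℂ) + 1) * Complex.exp (-(Complex.I * α))).re| <
      2 * ‖(1 + z) ^ (1/2 : ℂ) + 1‖ ^ 2 /
        (1 + ‖(1 + z) ^ (1/2 : ℂ) + 1‖ ^ 2))
    (xs : ℝ) (hxs : xs ∈ Set.Ioo 0 Real.pi)
    (hcos : Real.cos xs = (1 + ‖(1 + z) ^ (1/2 : ℂ) + 1‖ ^ 2) /
        (2 * ‖(1 + z) ^ (1/2 : ℂ) + 1‖ ^ 2) *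
        (((1 + z) ^ (1/2 : ℂ) + 1) * Complex.exp (-(Complex.I * α))).re) :
    ‖(1 + z) ^ (1/2 : ℂ) - 1 + Complex.exp (-(Complex.I * α))‖ ^ 2 <
      ‖(1 + z) ^ (1/2 : ℂ) + 1 - Complex.exp (Complex.I * α) * Complex.exp (Complex.I * xs)‖ *
      ‖(1 + z) ^ (1/2 : ℂ) + 1 - Complex.exp (Complex.I * α) * Complex.exp (-(Complex.I * xs))‖ :=
  stmt_7_general z hz α hcond xs hcos
end

section
/- Let z ∈ ℂ with Re z > 0, where √(1+z) denotes the principal square root. Then (|√(1+z)+1|² − 1)² / (1 + |√(1+z)+1|²) ≥ (1 + |√(1+z) − 1|)², where moreover 1 + |z|/|√(1+z)+1| = 1 + |√(1+z) − 1|. -/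
open Complex Real

/-! Write `w = √(1+z)`, so that `w² = 1 + z` and `z = (w - 1)(w + 1)`, which gives the equality.
Since the principal root has `0 ≤ Re w` and `Re (w²) = 1 + Re z > 1`, with `a = Re w` and
`b = Im w` we get `a ≥ 1` and `b² ≤ a² - 1`. As `‖w + 1‖² - ‖w - 1‖² = 4a`, the inequality
reduces to `‖w - 1‖ ≤ 2(a - 1) + 2 / (1 + ‖w + 1‖²)`. Both sides are monotone in `b²` in the
unfavourable direction, so it suffices to check the boundary case `b² = a² - 1`, where it becomes
the one-variable polynomial inequality `2a(a + 1)(2a² - 2a - 1)² ≥ 0`. -/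

lemma Real.sqrt_two_mul_mul_sub_one_le {a : ℝ} (ha : 1 ≤ a) :
    √(2 * a * (a - 1)) ≤ 2 * (a - 1) + 2 / (2 * a ^ 2 + 2 * a + 1) := by
  set M := 2 * a ^ 2 + 2 * a + 1
  have hM : 0 < M := by positivity
  have hrhs : 2 * (a - 1) + 2 / M = (2 * (a - 1) * M + 2) / M := by field_simp
  have hgap : (2 * (a - 1) * M + 2) ^ 2 - 2 * a * (a - 1) * M ^ 2
      = 2 * a * (a + 1) * (2 * a ^ 2 - 2 * a - 1) ^ 2 := by
    simp only [M]; ring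
  rw [Real.sqrt_le_left (by rw [hrhs]; positivity), hrhs, div_pow, le_div_iff₀ (by positivity)]
  nlinarith [show 0 ≤ 2 * a * (a + 1) * (2 * a ^ 2 - 2 * a - 1) ^ 2 by positivity]

namespace Complex

lemma sq_norm_add_one (w : ℂ) : ‖w + 1‖ ^ 2 = (w.re + 1) ^ 2 + w.im ^ 2 := by
  rw [Complex.sq_norm, normSq_apply]; simp only [add_re, one_re, add_im, one_im]; ring

lemma sq_norm_sub_one (w : ℂ) : ‖w - 1‖ ^ 2 = (w.re - 1) ^ 2 + w.im ^ 2 := by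
  rw [Complex.sq_norm, normSq_apply]; simp only [sub_re, one_re, sub_im, one_im]; ring

lemma norm_sub_one_le {w : ℂ} (hre : 0 ≤ w.re) (hsq : 1 ≤ (w ^ 2).re) :
    ‖w - 1‖ ≤ 2 * (w.re - 1) + 2 / (1 + ‖w + 1‖ ^ 2) := by
  have him : w.im ^ 2 ≤ w.re ^ 2 - 1 := by rw [sq, mul_re] at hsq; nlinarith
  have ha : 1 ≤ w.re := by nlinarith [sq_nonneg w.im]
  calc ‖w - 1‖ ≤ √(2 * w.re * (w.re - 1)) := by
        rw [Real.le_sqrt (norm_nonneg _) (by nlinarith), sq_norm_sub_one]; nlinarith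
    _ ≤ 2 * (w.re - 1) + 2 / (2 * w.re ^ 2 + 2 * w.re + 1) := Real.sqrt_two_mul_mul_sub_one_le ha
    _ ≤ 2 * (w.re - 1) + 2 / (1 + ‖w + 1‖ ^ 2) := by
        gcongr 2 * (w.re - 1) + 2 / ?_
        rw [sq_norm_add_one]; nlinarith

lemma sq_one_add_norm_sub_one_le {w : ℂ} (hre : 0 ≤ w.re) (hsq : 1 ≤ (w ^ 2).re) :
    (1 + ‖w - 1‖) ^ 2 ≤ (‖w + 1‖ ^ 2 - 1) ^ 2 / (1 + ‖w + 1‖ ^ 2) := by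
  have hbound := norm_sub_one_le hre hsq
  have hdiff : ‖w + 1‖ ^ 2 - ‖w - 1‖ ^ 2 = 4 * w.re := by
    rw [sq_norm_add_one, sq_norm_sub_one]; ring
  have hm : 0 < 1 + ‖w + 1‖ ^ 2 := by positivity
  have hsplit : (‖w + 1‖ ^ 2 - 1) ^ 2 / (1 + ‖w + 1‖ ^ 2)
      = ‖w + 1‖ ^ 2 - 3 + 4 / (1 + ‖w + 1‖ ^ 2) := by field_simp; ring
  have hfour : 4 / (1 + ‖w + 1‖ ^ 2) = 2 * (2 / (1 + ‖w + 1‖ ^ 2)) := by ring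
  rw [hsplit, hfour, add_sq]
  linarith

end Complex

/-- For `z ∈ ℂ` with `Re z > 0`, with `√(1+z)` the principal square root,
`(|√(1+z)+1|² − 1)²/(1 + |√(1+z)+1|²) ≥ (1 + |√(1+z) − 1|)²`, and moreover
`1 + |z|/|√(1+z)+1| = 1 + |√(1+z) − 1|`. -/
theorem stmt_8 (z : ℂ) (hz : 0 < z.re) :
    (1 + ‖(1 + z) ^ (1/2 : ℂ) - 1‖) ^ 2 ≤
      (‖(1 + z) ^ (1/2 : ℂ) + 1‖ ^ 2 - 1) ^ 2 /
        (1 + ‖(1 + z) ^ (1/2 : ℂ) + 1‖ ^ 2) ∧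
    1 + ‖z‖ / ‖(1 + z) ^ (1/2 : ℂ) + 1‖ =
      1 + ‖(1 + z) ^ (1/2 : ℂ) - 1‖ := by
  rw [one_div]
  set w := (1 + z) ^ (2⁻¹ : ℂ)
  have hw_sq : w ^ 2 = 1 + z := cpow_ofNat_inv_pow (1 + z) 2
  have hw_re : 0 ≤ w.re := by rw [cpow_inv_two_re]; exact Real.sqrt_nonneg _
  have hsq : 1 ≤ (w ^ 2).re := by rw [hw_sq, add_re, one_re]; linarith
  refine ⟨sq_one_add_norm_sub_one_le hw_re hsq, ?_⟩
  have hz_factor : z = (w - 1) * (w + 1) := by linear_combination -hw_sq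
  have hw_add_one : w + 1 ≠ 0 := by
    intro h
    have h_re := congrArg re h
    rw [add_re, one_re, zero_re] at h_re
    linarith
  rw [hz_factor, norm_mul, mul_div_cancel_right₀ _ (norm_ne_zero_iff.mpr hw_add_one)]
end

section
/- For every t ≥ √2, the inequality (t(t+√2) − 1)² ≥ (1 + t(t+√2)) · (1 + √(t(t−√2)))² holds, where √ denotes the real (nonnegative) square root. -/
/-!
Put `a = t(t + √2)` and `s = √(t(t − √2))`. As `a s² = t⁴ − 2t²`, expanding both sides reduces the
inequality to `s (1 + a) ≤ √2 t (t² − 1)`. Both sides of this are nonnegative, and the difference of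
their squares is `a (t² − √2 t − 1)² ≥ 0`.
-/

open Real

lemma sq_sub_one_sub_one_add_mul_sq {t s : ℝ} (hs : s ^ 2 = t * (t - √2)) :
    (t * (t + √2) - 1) ^ 2 - (1 + t * (t + √2)) * (1 + s) ^ 2 =
      2 * (√2 * t * (t ^ 2 - 1) - s * (1 + t * (t + √2))) := by
  linear_combination (-(1 + t * (t + √2))) * hs + 2 * t ^ 2 * sq_sqrt (zero_le_two : (0 : ℝ) ≤ 2)

lemma sq_mul_one_add_le_sq {t s : ℝ} (ht : 0 ≤ t) (hs : s ^ 2 = t * (t - √2)) :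
    (s * (1 + t * (t + √2))) ^ 2 ≤ (√2 * t * (t ^ 2 - 1)) ^ 2 := by
  have hdiff : (√2 * t * (t ^ 2 - 1)) ^ 2 - (s * (1 + t * (t + √2))) ^ 2 =
      t * (t + √2) * (t ^ 2 - √2 * t - 1) ^ 2 := by
    linear_combination (-(1 + t * (t + √2)) ^ 2) * hs +
      (t ^ 6 + t ^ 2) * sq_sqrt (zero_le_two : (0 : ℝ) ≤ 2)
  have : 0 ≤ t * (t + √2) * (t ^ 2 - √2 * t - 1) ^ 2 := by positivity
  linarith

lemma sqrt_mul_one_add_le {t : ℝ} (ht : √2 ≤ t) :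
    √(t * (t - √2)) * (1 + t * (t + √2)) ≤ √2 * t * (t ^ 2 - 1) := by
  have ht₀ : 0 ≤ t := (sqrt_nonneg 2).trans ht
  have ht₁ : 1 ≤ t := one_le_sqrt.mpr one_le_two |>.trans ht
  have hs : √(t * (t - √2)) ^ 2 = t * (t - √2) :=
    sq_sqrt (mul_nonneg ht₀ (sub_nonneg.mpr ht))
  refine (pow_le_pow_iff_left₀ (by positivity) ?_ two_ne_zero).mp (sq_mul_one_add_le_sq ht₀ hs)
  have : 0 ≤ t ^ 2 - 1 := by nlinarith
  positivity

/-- For every real `t ≥ √2`, the inequality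
`(t(t+√2) − 1)² ≥ (1 + t(t+√2)) · (1 + √(t(t−√2)))²` holds. -/
theorem stmt_9 (t : ℝ) (ht : Real.sqrt 2 ≤ t) :
    (1 + t * (t + Real.sqrt 2)) * (1 + Real.sqrt (t * (t - Real.sqrt 2))) ^ 2 ≤
      (t * (t + Real.sqrt 2) - 1) ^ 2 := by
  have hs : √(t * (t - √2)) ^ 2 = t * (t - √2) :=
    sq_sqrt (mul_nonneg ((sqrt_nonneg 2).trans ht) (sub_nonneg.mpr ht))
  linarith [sq_sub_one_sub_one_add_mul_sq hs, sqrt_mul_one_add_le ht]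
end

section
/- Let r be a positive integer and let A be a complex symmetric r×r matrix whose real part (the real symmetric matrix of entrywise real parts) is positive definite. Then ∫_{ℝ^r} e^{−(1/2) tᵀ A t} dt converges absolutely and there exists w ∈ ℂ with w² = det A such that ∫_{ℝ^r} e^{−(1/2) tᵀ A t} dt = (2π)^{r/2} / w; moreover, when A has real entries (hence is real positive definite), w = √(det A) is the positive real square root. -/
/-!
Write `A = B + i C` with `B = Re A` positive definite and `C = Im A` symmetric. A real
congruence diagonalises both at once, `Pᵀ B P = 1` and `Pᵀ C P = diag μ`, so the substitution
`t = P s` turns the integrand into `∏ⱼ exp (-dⱼ sⱼ² / 2)` with `dⱼ = 1 + i μⱼ`, `Re dⱼ = 1`.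
Hence the integral is `|det P| ∏ⱼ √(2π) / dⱼ^(1/2)`, and `w = ∏ⱼ dⱼ^(1/2) / |det P|` satisfies
`w² = ∏ⱼ dⱼ / (det P)² = det A`. For real `A` we get `μ = 0`, so `w = 1 / |det P| = √(det A)`.
-/

open MeasureTheory Matrix Complex

namespace Matrix

variable {ι : Type*} [Fintype ι]

theorem sum_sum_mul_mul_eq_dotProduct_mulVec {R : Type*} [CommSemiring R] (M : Matrix ι ι R)
    (x : ι → R) : ∑ j, ∑ k, M j k * x j * x k = x ⬝ᵥ M *ᵥ x := by
  simp only [dotProduct, mulVec, Finset.mul_sum]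
  exact Finset.sum_congr rfl fun j _ => Finset.sum_congr rfl fun k _ => by ring

theorem sum_sum_mul_mulVec_mul_mulVec (A : Matrix ι ι ℂ) (P : Matrix ι ι ℝ) (s : ι → ℝ) :
    ∑ j, ∑ k, A j k * ((P *ᵥ s) j : ℂ) * ((P *ᵥ s) k : ℂ) =
      ∑ j, ∑ k, ((P.map ofReal)ᵀ * A * P.map ofReal) j k * (s j : ℂ) * (s k : ℂ) := by
  have hs : (fun j => ((P *ᵥ s) j : ℂ)) = P.map ofReal *ᵥ fun j => (s j : ℂ) :=
    funext (RingHom.map_mulVec ofRealHom P s)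
  refine (sum_sum_mul_mul_eq_dotProduct_mulVec A _).trans (.trans ?_
    (sum_sum_mul_mul_eq_dotProduct_mulVec _ fun j => (s j : ℂ)).symm)
  rw [hs, mulVec_mulVec, dotProduct_mulVec, ← vecMul_transpose, vecMul_vecMul,
    ← dotProduct_mulVec, mul_assoc]

variable [DecidableEq ι]

theorem sum_sum_diagonal_mul_mul {R : Type*} [CommSemiring R] (d x : ι → R) :
    ∑ j, ∑ k, diagonal d j k * x j * x k = ∑ j, d j * x j ^ 2 := by
  simp [diagonal_apply, sq, mul_assoc]

theorem IsHermitian.exists_orthogonal_diagonalization {M : Matrix ι ι ℝ} (hM : M.IsHermitian) :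
    ∃ V : Matrix ι ι ℝ, Vᵀ * V = 1 ∧ Vᵀ * M * V = diagonal hM.eigenvalues := by
  refine ⟨hM.eigenvectorUnitary, ?_, ?_⟩
  · simpa [star_eq_conjTranspose, conjTranspose_eq_transpose_of_trivial] using
      (mem_unitaryGroup_iff').mp hM.eigenvectorUnitary.2
  · simpa [star_eq_conjTranspose, conjTranspose_eq_transpose_of_trivial] using
      hM.conjStarAlgAut_star_eigenvectorUnitary

open scoped MatrixOrder in
theorem PosDef.exists_transpose_mul_mul_eq_one_and_diagonal {B C : Matrix ι ι ℝ}
    (hB : B.PosDef) (hC : C.IsSymm) :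
    ∃ P : Matrix ι ι ℝ, IsUnit P.det ∧ Pᵀ * B * P = 1 ∧ ∃ μ : ι → ℝ, Pᵀ * C * P = diagonal μ := by
  obtain ⟨L, hBL⟩ := CStarAlgebra.nonneg_iff_eq_star_mul_self.mp hB.posSemidef.nonneg
  rw [star_eq_conjTranspose, conjTranspose_eq_transpose_of_trivial] at hBL
  have hL : IsUnit L.det := by
    have hdet := hB.det_pos
    rw [hBL, det_mul, det_transpose] at hdet
    exact isUnit_iff_ne_zero.mpr fun h => by simp [h] at hdet
  have hM : ((L⁻¹)ᵀ * C * L⁻¹).IsHermitian := by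
    rw [IsHermitian, conjTranspose_eq_transpose_of_trivial, transpose_mul, transpose_mul,
      hC.eq, transpose_transpose, mul_assoc]
  obtain ⟨V, hVV, hVM⟩ := hM.exists_orthogonal_diagonalization
  refine ⟨L⁻¹ * V, ?_, ?_, hM.eigenvalues, ?_⟩
  · rw [det_mul]
    exact (isUnit_nonsing_inv_det L hL).mul (isUnit_det_of_left_inverse hVV)
  · calc (L⁻¹ * V)ᵀ * B * (L⁻¹ * V) = Vᵀ * ((Lᵀ)⁻¹ * Lᵀ) * (L * L⁻¹) * V := by
          rw [hBL, transpose_mul, transpose_nonsing_inv]; noncomm_ring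
      _ = 1 := by
          rw [nonsing_inv_mul _ (by rwa [det_transpose]), mul_nonsing_inv _ hL, mul_one, mul_one,
            hVV]
  · rw [← hVM, transpose_mul]
    noncomm_ring

theorem transpose_map_ofReal_mul_mul_eq_diagonal {A : Matrix ι ι ℂ} {P : Matrix ι ι ℝ}
    {μ : ι → ℝ} (hre : Pᵀ * A.map re * P = 1) (him : Pᵀ * A.map im * P = diagonal μ) :
    (P.map ofReal)ᵀ * A * P.map ofReal = diagonal fun j => 1 + μ j * I := by
  have hA : A = (A.map re).map ofReal + I • (A.map im).map ofReal := by
    ext i j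
    simpa [mul_comm] using (re_add_im (A i j)).symm
  have hmap (X : Matrix ι ι ℝ) :
      (Pᵀ * X * P).map ofReal = (P.map ofReal)ᵀ * X.map ofReal * P.map ofReal := by
    change (Pᵀ * X * P).map ofRealHom = (P.map ofRealHom)ᵀ * X.map ofRealHom * P.map ofRealHom
    rw [Matrix.map_mul, Matrix.map_mul, transpose_map]
  rw [hA, mul_add, add_mul, Matrix.mul_smul, Matrix.smul_mul, ← hmap, ← hmap, hre, him]
  ext i j
  by_cases h : i = j <;> simp [h, mul_comm]

theorem det_mul_det_sq_eq_prod_of_transpose_mul_mul_eq_diagonal {A : Matrix ι ι ℂ}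
    {P : Matrix ι ι ℝ} {d : ι → ℂ} (h : (P.map ofReal)ᵀ * A * P.map ofReal = diagonal d) :
    A.det * (P.det : ℂ) ^ 2 = ∏ j, d j := by
  have hP : (P.map ofReal).det = P.det := (ofRealHom.map_det P).symm
  rw [← det_diagonal, ← h, det_mul, det_mul, det_transpose, hP]
  ring

variable {E : Type*} [NormedAddCommGroup E] {P : Matrix ι ι ℝ}

theorem measurableEmbedding_mulVec (hP : IsUnit P.det) :
    MeasurableEmbedding (P *ᵥ · : (ι → ℝ) → ι → ℝ) :=
  (toLinearEquiv' P (P.invertibleOfIsUnitDet hP)).toContinuousLinearEquiv.toHomeomorph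
    |>.measurableEmbedding

theorem map_mulVec_volume (hP : IsUnit P.det) :
    Measure.map (P *ᵥ ·) (volume : Measure (ι → ℝ)) = ENNReal.ofReal |P.det|⁻¹ • volume := by
  rw [← abs_inv, ← Real.map_matrix_volume_pi_eq_smul_volume_pi hP.ne_zero]
  rfl

theorem integrable_comp_mulVec_iff (hP : IsUnit P.det) {g : (ι → ℝ) → E} :
    Integrable (fun s => g (P *ᵥ s)) ↔ Integrable g := by
  rw [← Function.comp_def, ← (measurableEmbedding_mulVec hP).integrable_map_iff,
    map_mulVec_volume hP, integrable_smul_measure (by simpa using hP.ne_zero) ENNReal.ofReal_ne_top]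

theorem integral_comp_mulVec [NormedSpace ℝ E] (hP : IsUnit P.det) (g : (ι → ℝ) → E) :
    ∫ s, g (P *ᵥ s) = |P.det|⁻¹ • ∫ t, g t := by
  rw [← (measurableEmbedding_mulVec hP).integral_map, map_mulVec_volume hP, integral_smul_measure,
    ENNReal.toReal_ofReal (by positivity)]

end Matrix

theorem Complex.ofReal_mul_cpow {a : ℝ} (ha : 0 < a) {z : ℂ} (hz : z ≠ 0) (s : ℂ) :
    ((a : ℂ) * z) ^ s = (a : ℂ) ^ s * z ^ s := by
  have ha' : (a : ℂ) ≠ 0 := ofReal_ne_zero.mpr ha.ne'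
  rw [cpow_def_of_ne_zero (mul_ne_zero ha' hz), log_ofReal_mul ha hz, ofReal_log ha.le, add_mul,
    exp_add, ← cpow_def_of_ne_zero ha', ← cpow_def_of_ne_zero hz]

theorem integral_cexp_neg_half_mul_sq {d : ℂ} (hd : 0 < d.re) :
    ∫ x : ℝ, cexp (-(d / 2) * (x : ℂ) ^ 2) = √(2 * Real.pi) / d ^ (1 / 2 : ℂ) := by
  have hd0 : d ≠ 0 := fun h => by simp [h] at hd
  have harg : d.arg ≠ Real.pi := by
    rw [Ne, arg_eq_pi_iff]
    exact fun h => (h.1.trans hd).false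
  rw [integral_gaussian_complex (by simpa using hd),
    show (Real.pi : ℂ) / (d / 2) = ((2 * Real.pi : ℝ) : ℂ) * d⁻¹ by push_cast; field_simp,
    ofReal_mul_cpow (by positivity) (inv_ne_zero hd0), inv_cpow _ _ harg,
    Real.sqrt_eq_rpow, ofReal_cpow (by positivity), div_eq_mul_inv]
  push_cast
  rfl

section Product

variable {ι : Type*} [Fintype ι]

theorem cexp_neg_half_sum_mul_sq (d : ι → ℂ) (s : ι → ℝ) :
    cexp (-(1 / 2) * ∑ j, d j * (s j : ℂ) ^ 2) = ∏ j, cexp (-(d j / 2) * (s j : ℂ) ^ 2) := by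
  rw [Finset.mul_sum, ← exp_sum]
  congr 1
  exact Finset.sum_congr rfl fun j _ => by ring

theorem integrable_cexp_neg_half_sum_mul_sq {d : ι → ℂ} (hd : ∀ j, 0 < (d j).re) :
    Integrable fun s : ι → ℝ => cexp (-(1 / 2) * ∑ j, d j * (s j : ℂ) ^ 2) := by
  simp only [cexp_neg_half_sum_mul_sq]
  exact Integrable.fintype_prod (f := fun j (x : ℝ) => cexp (-(d j / 2) * (x : ℂ) ^ 2))
    fun j => integrable_cexp_neg_mul_sq (by simpa using hd j)

theorem integral_cexp_neg_half_sum_mul_sq {d : ι → ℂ} (hd : ∀ j, 0 < (d j).re) :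
    ∫ s : ι → ℝ, cexp (-(1 / 2) * ∑ j, d j * (s j : ℂ) ^ 2) =
      (((2 * Real.pi) ^ ((Fintype.card ι : ℝ) / 2) : ℝ) : ℂ) / ∏ j, d j ^ (1 / 2 : ℂ) := by
  simp only [cexp_neg_half_sum_mul_sq]
  rw [volume_pi,
    integral_fintype_prod_eq_prod (f := fun j (x : ℝ) => cexp (-(d j / 2) * (x : ℂ) ^ 2))]
  simp only [integral_cexp_neg_half_mul_sq (hd _), Finset.prod_div_distrib, Finset.prod_const,
    Finset.card_univ]
  rw [Real.rpow_div_two_eq_sqrt _ (by positivity), Real.rpow_natCast]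
  push_cast
  rfl

end Product

theorem stmt_15_general (r : ℕ) (A : Matrix (Fin r) (Fin r) ℂ)
    (hsymm : A.IsSymm) (hpos : (A.map Complex.re).PosDef) :
    MeasureTheory.Integrable (fun t : Fin r → ℝ =>
      Complex.exp (-(1 / 2 : ℂ) * ∑ j, ∑ k, A j k * (t j : ℂ) * (t k : ℂ))) ∧
    ∃ w : ℂ, w ^ 2 = A.det ∧
      (∫ t : Fin r → ℝ,
          Complex.exp (-(1 / 2 : ℂ) * ∑ j, ∑ k, A j k * (t j : ℂ) * (t k : ℂ))) =
        (((2 * Real.pi) ^ ((r : ℝ) / 2) : ℝ) : ℂ) / w ∧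
      ((∀ i j, (A i j).im = 0) → w = (Real.sqrt A.det.re : ℂ)) := by
  obtain ⟨P, hP, hre, μ, him⟩ :=
    hpos.exists_transpose_mul_mul_eq_one_and_diagonal (hsymm.map Complex.im)
  set d : Fin r → ℂ := fun j => 1 + μ j * I
  have hd : ∀ j, 0 < (d j).re := fun j => by simp [d]
  have hdiag : (P.map ofReal)ᵀ * A * P.map ofReal = diagonal d :=
    transpose_map_ofReal_mul_mul_eq_diagonal hre him
  have hdet := det_mul_det_sq_eq_prod_of_transpose_mul_mul_eq_diagonal hdiag
  set g : (Fin r → ℝ) → ℂ := fun t => cexp (-(1 / 2 : ℂ) * ∑ j, ∑ k, A j k * (t j : ℂ) * (t k : ℂ))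
  have hg : ∀ s, g (P *ᵥ s) = cexp (-(1 / 2) * ∑ j, d j * (s j : ℂ) ^ 2) := fun s => by
    simp only [g, sum_sum_mul_mulVec_mul_mulVec, hdiag, sum_sum_diagonal_mul_mul]
  have hPabs : ((|P.det| : ℝ) : ℂ) ≠ 0 := by simpa using hP.ne_zero
  refine ⟨(integrable_comp_mulVec_iff hP).mp ?_, (∏ j, d j ^ (1 / 2 : ℂ)) / |P.det|, ?_, ?_, ?_⟩
  · simpa only [hg] using integrable_cexp_neg_half_sum_mul_sq hd
  · have hsq (j : Fin r) : (d j ^ (1 / 2 : ℂ)) ^ 2 = d j := by rw [one_div, cpow_ofNat_inv_pow]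
    rw [div_pow, ← Finset.prod_pow, Finset.prod_congr rfl fun j _ => hsq j, ← hdet,
      ← ofReal_pow, ← ofReal_pow, sq_abs, mul_div_cancel_right₀]
    exact_mod_cast pow_ne_zero 2 hP.ne_zero
  · have hcomp := integral_comp_mulVec hP g
    simp only [hg, integral_cexp_neg_half_sum_mul_sq hd, Fintype.card_fin, real_smul] at hcomp
    rw [div_div_eq_mul_div, mul_div_right_comm, hcomp, ofReal_inv, mul_comm, ← mul_assoc,
      mul_inv_cancel₀ hPabs, one_mul]
  · intro hreal
    have hμ : μ = 0 := by
      have him0 : A.map im = 0 := ext fun i j => hreal i j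
      rwa [him0, mul_zero, zero_mul, eq_comm, diagonal_eq_zero] at him
    have hd1 : d = 1 := funext fun j => by simp [d, hμ]
    have hdetA : A.det = ((P.det ^ 2)⁻¹ : ℝ) := by
      simp only [hd1, Pi.one_apply, Finset.prod_const_one] at hdet
      push_cast
      exact eq_inv_of_mul_eq_one_left hdet
    rw [hdetA, ofReal_re, Real.sqrt_inv, Real.sqrt_sq_eq_abs, ofReal_inv, hd1]
    simp only [Pi.one_apply, one_cpow, Finset.prod_const_one, one_div]

/-- Complex Gaussian integral: for a complex symmetric `r×r` matrix `A` whose entrywise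
real part is positive definite, `∫_{ℝ^r} e^{−(1/2)tᵀAt} dt` converges absolutely and equals
`(2π)^{r/2}/w` for some `w` with `w² = det A`; if `A` is real, `w = √(det A)`. -/
theorem stmt_15 (r : ℕ) (hr : 0 < r) (A : Matrix (Fin r) (Fin r) ℂ)
    (hsymm : A.IsSymm) (hpos : (A.map Complex.re).PosDef) :
    MeasureTheory.Integrable (fun t : Fin r → ℝ =>
      Complex.exp (-(1 / 2 : ℂ) * ∑ j, ∑ k, A j k * (t j : ℂ) * (t k : ℂ))) ∧
    ∃ w : ℂ, w ^ 2 = A.det ∧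
      (∫ t : Fin r → ℝ,
          Complex.exp (-(1 / 2 : ℂ) * ∑ j, ∑ k, A j k * (t j : ℂ) * (t k : ℂ))) =
        (((2 * Real.pi) ^ ((r : ℝ) / 2) : ℝ) : ℂ) / w ∧
      ((∀ i j, (A i j).im = 0) → w = (Real.sqrt A.det.re : ℂ)) :=
  stmt_15_general r A hsymm hpos
end
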